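/- arXiv:2307.11062 — 2 statements merged into one kernel-verified Lean document; each statement's English description precedes it below -/
import Mathlib

section
/- Let f : ℕ → ℝ≥0 and suppose there exist L ≥ 1 and σ > 2 such that defining F(ℓ) := ∑_{k=ℓ-L}^{ℓ+L} k f(k), one has σ F(ℓ) ≤ F(ℓ+L) + F(ℓ-L) for all L ≤ ℓ ≤ M, and ∑_k f(k) = 1, k f(k) ≤ N for all k. Then there exist C, ε' > 0 (depending on σ, L but not on N, M) such that F(ℓL) ≤ C e^{-ε'ℓ} + N(σ-1)^{-M/(2L)} for all 1 ≤ ℓ ≤ M/(2L). -/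
open Finset

/-!
Sampling the window sums at multiples of `L`, `G j = F (j L)` is a discrete subsolution,
`σ G j ≤ G (j + 1) + G (j - 1)`, on `0 < j < m = M / L`. With `r ∈ (0, 1)` the small root of
`r² + 1 = σ r`, the sequence `j ↦ r ^ j G 0 + r ^ (m - j) G m` solves the recurrence with equality,
so the discrete maximum principle (a subsolution has no positive interior maximum when `σ > 2`)
bounds `G` by it. The normalisation `∑ f = 1` gives `G j ≤ (j + 1) L`; the factor `m + 1` in front
of `r ^ (m - ℓ)` is absorbed by half of the decay, since `m - ℓ ≥ m / 2` for `ℓ ≤ m / 2`.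
-/

section DiscreteMaximumPrinciple

variable {σ : ℝ} {m : ℕ}

theorem nonpos_of_discrete_subsolution (hσ : 2 < σ) {d : ℕ → ℝ}
    (hsub : ∀ j, 0 < j → j < m → σ * d j ≤ d (j + 1) + d (j - 1))
    (h0 : d 0 ≤ 0) (hm : d m ≤ 0) {j : ℕ} (hj : j ≤ m) : d j ≤ 0 := by
  obtain ⟨j₀, hj₀, hmax⟩ := exists_max_image (range (m + 1)) d nonempty_range_add_one
  suffices d j₀ ≤ 0 from (hmax j (mem_range.2 (by omega))).trans this
  rw [mem_range] at hj₀
  rcases Nat.eq_zero_or_pos j₀ with rfl | hpos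
  · exact h0
  rcases eq_or_lt_of_le (Nat.lt_succ_iff.1 hj₀) with rfl | hlt
  · exact hm
  have hnext := hmax (j₀ + 1) (mem_range.2 (by omega))
  have hprev := hmax (j₀ - 1) (mem_range.2 (by omega))
  nlinarith [hsub j₀ hpos hlt]

theorem le_of_discrete_subsolution_of_supersolution (hσ : 2 < σ) {a b : ℕ → ℝ}
    (ha : ∀ j, 0 < j → j < m → σ * a j ≤ a (j + 1) + a (j - 1))
    (hb : ∀ j, 0 < j → j < m → b (j + 1) + b (j - 1) ≤ σ * b j)
    (h0 : a 0 ≤ b 0) (hm : a m ≤ b m) {j : ℕ} (hj : j ≤ m) : a j ≤ b j := by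
  have hsub : ∀ i, 0 < i → i < m →
      σ * (a - b) i ≤ (a - b) (i + 1) + (a - b) (i - 1) := fun i hi him => by
    simp only [Pi.sub_apply]
    linarith [ha i hi him, hb i hi him]
  have := nonpos_of_discrete_subsolution hσ hsub (by simpa using h0) (by simpa using hm) hj
  simpa using this

theorem pow_add_pow_sub_recurrence {r : ℝ} (hr : r * r + 1 = σ * r) (p q : ℝ) {j : ℕ}
    (hj : 0 < j) (hjm : j < m) :
    (p * r ^ (j + 1) + q * r ^ (m - (j + 1))) + (p * r ^ (j - 1) + q * r ^ (m - (j - 1)))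
      = σ * (p * r ^ j + q * r ^ (m - j)) := by
  obtain ⟨i, rfl⟩ : ∃ i, j = i + 1 := ⟨j - 1, by omega⟩
  obtain ⟨t, rfl⟩ : ∃ t, m = i + 2 + t := ⟨m - (i + 2), by omega⟩
  have e₁ : i + 2 + t - (i + 1 + 1) = t := by omega
  have e₂ : i + 2 + t - (i + 1) = t + 1 := by omega
  have e₃ : i + 2 + t - (i + 1 - 1) = t + 2 := by omega
  rw [e₁, e₂, e₃, Nat.add_sub_cancel]
  linear_combination (p * r ^ i + q * r ^ t) * hr

theorem le_pow_mul_add_pow_sub_mul (hσ : 2 < σ) {r : ℝ} (hr0 : 0 ≤ r)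
    (hr : r * r + 1 = σ * r) {a : ℕ → ℝ} (ha0 : 0 ≤ a 0) (ham : 0 ≤ a m)
    (hsub : ∀ j, 0 < j → j < m → σ * a j ≤ a (j + 1) + a (j - 1)) {j : ℕ} (hj : j ≤ m) :
    a j ≤ a 0 * r ^ j + a m * r ^ (m - j) := by
  refine le_of_discrete_subsolution_of_supersolution (b := fun j => a 0 * r ^ j + a m * r ^ (m - j))
    hσ hsub (fun i hi him => (pow_add_pow_sub_recurrence hr _ _ hi him).le) ?_ ?_ hj
  · simpa using mul_nonneg ham (pow_nonneg hr0 m)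
  · simpa using mul_nonneg ha0 (pow_nonneg hr0 m)

end DiscreteMaximumPrinciple

theorem exists_sq_char_root (σ : ℝ) (hσ : 2 < σ) :
    ∃ ρ ∈ Set.Ioo (0 : ℝ) 1, ρ ^ 2 * ρ ^ 2 + 1 = σ * ρ ^ 2 := by
  have hs : √(σ ^ 2 - 4) ^ 2 = σ ^ 2 - 4 := Real.sq_sqrt (by nlinarith)
  have hs0 : 0 ≤ √(σ ^ 2 - 4) := Real.sqrt_nonneg _
  set r := (σ - √(σ ^ 2 - 4)) / 2 with hr
  have hr0 : 0 < r := by nlinarith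
  have hr1 : r < 1 := by nlinarith
  have hρ : √r ^ 2 = r := Real.sq_sqrt hr0.le
  refine ⟨√r, ⟨Real.sqrt_pos.2 hr0, (Real.sqrt_lt' one_pos).2 (by simpa using hr1)⟩, ?_⟩
  rw [hρ, hr]
  linear_combination hs / 4

theorem natCast_mul_pow_le_inv_one_sub {ρ : ℝ} (h0 : 0 ≤ ρ) (h1 : ρ < 1) (n : ℕ) :
    n * ρ ^ n ≤ (1 - ρ)⁻¹ := calc
  n * ρ ^ n = ∑ _i ∈ range n, ρ ^ n := by rw [sum_const, card_range, nsmul_eq_mul]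
  _ ≤ ∑ i ∈ range n, ρ ^ i :=
    sum_le_sum fun i hi => pow_le_pow_of_le_one h0 h1.le (mem_range.1 hi).le
  _ ≤ (1 - ρ)⁻¹ := by simpa using geom_sum_Ico_le_of_lt_one (m := 0) (n := n) h0 h1

theorem le_mul_pow_of_discrete_subsolution {σ ρ B : ℝ} (hσ : 2 < σ) (hρ0 : 0 ≤ ρ) (hρ1 : ρ < 1)
    (hρ : ρ ^ 2 * ρ ^ 2 + 1 = σ * ρ ^ 2) {a : ℕ → ℝ} {m : ℕ} (ha : ∀ j, 0 ≤ a j)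
    (haB : ∀ j, a j ≤ (j + 1) * B)
    (hsub : ∀ j, 0 < j → j < m → σ * a j ≤ a (j + 1) + a (j - 1)) {ℓ : ℕ} (hℓ : 2 * ℓ ≤ m) :
    a ℓ ≤ B * (2 + 2 * (1 - ρ)⁻¹) * ρ ^ ℓ := by
  have hB : 0 ≤ B := by simpa using (ha 0).trans (haB 0)
  have hpow := le_pow_mul_add_pow_sub_mul hσ (sq_nonneg ρ) hρ (ha 0) (ha m) hsub (by omega : ℓ ≤ m)
  rw [← pow_mul, ← pow_mul] at hpow
  set n := m - ℓ
  have hleft : a 0 * ρ ^ (2 * ℓ) ≤ B * ρ ^ ℓ :=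
    mul_le_mul (by simpa using haB 0) (pow_le_pow_of_le_one hρ0 hρ1.le (by omega))
      (by positivity) hB
  have hright : a m * ρ ^ (2 * n) ≤ B * (1 + 2 * (1 - ρ)⁻¹) * ρ ^ ℓ := calc
    a m * ρ ^ (2 * n) ≤ ((2 * n + 1) * B) * (ρ ^ ℓ * ρ ^ n) := by
      rw [← pow_add]
      refine mul_le_mul ((haB m).trans (mul_le_mul_of_nonneg_right ?_ hB))
        (pow_le_pow_of_le_one hρ0 hρ1.le (by omega)) (by positivity) (by positivity)
      exact_mod_cast (by omega : m + 1 ≤ 2 * n + 1)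
    _ = B * (2 * (n * ρ ^ n) + ρ ^ n) * ρ ^ ℓ := by ring
    _ ≤ B * (1 + 2 * (1 - ρ)⁻¹) * ρ ^ ℓ := by
      refine mul_le_mul_of_nonneg_right (mul_le_mul_of_nonneg_left ?_ hB) (by positivity)
      linarith [natCast_mul_pow_le_inv_one_sub hρ0 hρ1 n, pow_le_one₀ hρ0 hρ1.le (n := n)]
  linarith

section WindowSums

variable (f : ℕ → ℝ) (L : ℕ)

def windowSum (ℓ : ℕ) : ℝ := ∑ k ∈ Icc (ℓ - L) (ℓ + L), (k : ℝ) * f k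

variable {f}

theorem windowSum_nonneg (hf : ∀ k, 0 ≤ f k) (ℓ : ℕ) : 0 ≤ windowSum f L ℓ :=
  sum_nonneg fun k _ => mul_nonneg k.cast_nonneg (hf k)

theorem windowSum_le (hf : ∀ k, 0 ≤ f k) (hsum : Summable f) (ℓ : ℕ) :
    windowSum f L ℓ ≤ (ℓ + L) * ∑' k, f k := calc
  windowSum f L ℓ ≤ ∑ k ∈ Icc (ℓ - L) (ℓ + L), ((ℓ + L : ℕ) : ℝ) * f k :=
    sum_le_sum fun k hk => mul_le_mul_of_nonneg_right (by exact_mod_cast (mem_Icc.1 hk).2) (hf k)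
  _ ≤ (ℓ + L) * ∑' k, f k := by
    rw [← mul_sum, Nat.cast_add]
    exact mul_le_mul_of_nonneg_left (hsum.sum_le_tsum _ fun k _ => hf k) (by positivity)

theorem windowSum_mul_subsolution {σ : ℝ} {M : ℕ}
    (hrec : ∀ ℓ, L ≤ ℓ → ℓ ≤ M →
      σ * windowSum f L ℓ ≤ windowSum f L (ℓ + L) + windowSum f L (ℓ - L))
    (j : ℕ) (hj : 0 < j) (hjm : j < M / L) :
    σ * windowSum f L (j * L) ≤ windowSum f L ((j + 1) * L) + windowSum f L ((j - 1) * L) := by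
  rw [add_one_mul, Nat.sub_one_mul]
  exact hrec _ (Nat.le_mul_of_pos_left L hj)
    ((Nat.mul_le_mul_right L hjm.le).trans (Nat.div_mul_le_self M L))

end WindowSums

/-- Exponential decay of the window sums from the window difference
inequality `σ F(ℓ) ≤ F(ℓ+L) + F(ℓ-L)`, where `F(ℓ) = ∑_{k=ℓ-L}^{ℓ+L} k f(k)`,
together with normalization `∑ f = 1` and the a priori bound `k f(k) ≤ N`. The
constants `C, ε'` depend only on `σ` and `L`. -/
theorem stmt14 (σ : ℝ) (L : ℕ) (hσ : 2 < σ) (hL : 1 ≤ L) :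
    ∃ C ε' : ℝ, 0 < C ∧ 0 < ε' ∧
      ∀ (N : ℝ) (M : ℕ) (f : ℕ → ℝ),
        (∀ k, 0 ≤ f k) → Summable f → (∑' k, f k) = 1 →
        (∀ k : ℕ, (k : ℝ) * f k ≤ N) →
        (∀ ℓ, L ≤ ℓ → ℓ ≤ M →
          σ * (∑ k ∈ Finset.Icc (ℓ - L) (ℓ + L), (k : ℝ) * f k)
            ≤ (∑ k ∈ Finset.Icc (ℓ + L - L) (ℓ + L + L), (k : ℝ) * f k)
              + (∑ k ∈ Finset.Icc (ℓ - L - L) (ℓ - L + L), (k : ℝ) * f k)) →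
        ∀ ℓ, 1 ≤ ℓ → ℓ ≤ M / (2 * L) →
          (∑ k ∈ Finset.Icc (ℓ * L - L) (ℓ * L + L), (k : ℝ) * f k)
            ≤ C * Real.exp (-(ε' * ℓ)) + N * (σ - 1) ^ (-((M : ℝ) / (2 * L))) := by
  obtain ⟨ρ, ⟨hρ0, hρ1⟩, hρ⟩ := exists_sq_char_root σ hσ
  have hL0 : (0 : ℝ) < L := by exact_mod_cast hL
  refine ⟨L * (2 + 2 * (1 - ρ)⁻¹), -Real.log ρ, by have := inv_pos.2 (sub_pos.2 hρ1); positivity,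
    neg_pos.2 (Real.log_neg hρ0 hρ1), ?_⟩
  intro N M f hf hsum htsum hN hrec ℓ _ hℓ
  have hdecay : windowSum f L (ℓ * L) ≤ L * (2 + 2 * (1 - ρ)⁻¹) * ρ ^ ℓ := by
    refine le_mul_pow_of_discrete_subsolution (a := fun j => windowSum f L (j * L)) hσ hρ0.le hρ1 hρ
      (fun j => windowSum_nonneg L hf _) (fun j => ?_)
      (windowSum_mul_subsolution L hrec) (m := M / L) ?_
    · simpa [htsum, add_one_mul] using windowSum_le L hf hsum (j * L)
    · rw [mul_comm, ← Nat.div_div_eq_div_mul] at hℓ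
      omega
  have hexp : Real.exp (-(-Real.log ρ * ℓ)) = ρ ^ ℓ := by
    rw [neg_mul, neg_neg, mul_comm, Real.exp_nat_mul, Real.exp_log hρ0]
  have hN0 : 0 ≤ N := by simpa using hN 0
  have hσ1 : 0 < σ - 1 := by linarith
  rw [hexp]
  exact hdecay.trans (le_add_of_nonneg_right (by positivity))
end

section
/- Let μ > 0 and L ∈ ℕ with (μ/2)(L-3) > 2. Define σ := (μ/2)(L-3). If F : ℕ → ℝ≥0 satisfies μ F_{L'}(ℓ) ≤ f(ℓ+L'+2)+f(ℓ+L'+1)+f(ℓ-L'-1)+f(ℓ-L'-2) where F_{L'}(ℓ) = ∑_{k=ℓ-L'}^{ℓ+L'} f(k) for all L ≤ L' ≤ 2L-2, then ∑_{k=ℓ+L+1}^{ℓ+2L} f(k) + ∑_{k=ℓ-2L}^{ℓ-L-1} f(k) ≥ (μ/2) ∑_{j=0}^{L-2} F_{L+j}(ℓ)/2 ≥ σ F_L(ℓ) (pairing consecutive j's). -/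
/-!
Summing the hypothesis over the windows `L' = L + j`, `j < L - 1`, the right-hand sides involve
the points `ℓ + L + j + 1`, `ℓ + L + j + 2 ∈ [ℓ + L + 1, ℓ + 2L]` and their mirror images in
`[ℓ - 2L, ℓ - L - 1]`; for each shift the map `j ↦ point` is injective, so every point is hit at
most twice and `μ ∑ⱼ F_{L+j} ≤ 2 (outer sums)`. The second inequality holds because windows grow
with their radius, so `∑ⱼ F_{L+j} ≥ (L - 1) F_L ≥ (L - 3) F_L`.
-/

open Finset

theorem sum_comp_le_sum_of_injOn {ι κ M : Type*} [AddCommMonoid M] [PartialOrder M]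
    [IsOrderedAddMonoid M] {s : Finset ι} {t : Finset κ} {f : κ → M} {g : ι → κ}
    (hg : Set.InjOn g s) (hst : Set.MapsTo g s t) (hf : ∀ k ∈ t, 0 ≤ f k) :
    ∑ i ∈ s, f (g i) ≤ ∑ k ∈ t, f k := by
  classical
  rw [← sum_image hg]
  exact sum_le_sum_of_subset_of_nonneg (image_subset_iff.2 hst) fun k hk _ ↦ hf k hk

section Windows

variable {f : ℕ → ℝ}

theorem sum_Icc_window_mono (hf : ∀ k, 0 ≤ f k) (ℓ : ℕ) :
    Monotone fun n ↦ ∑ k ∈ Icc (ℓ - n) (ℓ + n), f k := fun m n hmn ↦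
  sum_le_sum_of_subset_of_nonneg (Icc_subset_Icc (by omega) (by omega)) fun k _ _ ↦ hf k

theorem sum_range_right_boundary_le (hf : ∀ k, 0 ≤ f k) (ℓ L : ℕ) {c : ℕ} (hc₁ : 1 ≤ c)
    (hc₂ : c ≤ 2) :
    ∑ j ∈ range (L - 1), f (ℓ + (L + j) + c) ≤ ∑ k ∈ Icc (ℓ + L + 1) (ℓ + 2 * L), f k :=
  sum_comp_le_sum_of_injOn (fun _ _ _ _ h ↦ by omega)
    (fun j hj ↦ by simp only [coe_range, Set.mem_Iio, coe_Icc, Set.mem_Icc] at hj ⊢; omega)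
    fun k _ ↦ hf k

theorem sum_range_left_boundary_le (hf : ∀ k, 0 ≤ f k) {ℓ L : ℕ} (hℓ : 2 * L ≤ ℓ) {c : ℕ}
    (hc₁ : 1 ≤ c) (hc₂ : c ≤ 2) :
    ∑ j ∈ range (L - 1), f (ℓ - (L + j) - c) ≤ ∑ k ∈ Icc (ℓ - 2 * L) (ℓ - L - 1), f k :=
  sum_comp_le_sum_of_injOn
    (fun x hx y hy h ↦ by simp only [coe_range, Set.mem_Iio] at hx hy; omega)
    (fun j hj ↦ by simp only [coe_range, Set.mem_Iio, coe_Icc, Set.mem_Icc] at hj ⊢; omega)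
    fun k _ ↦ hf k

theorem mul_sum_windows_le_boundary {μ : ℝ} {L ℓ : ℕ} (hℓ : 2 * L ≤ ℓ) (hf : ∀ k, 0 ≤ f k)
    (hyp : ∀ L', L ≤ L' → L' ≤ 2 * L - 2 →
      μ * (∑ k ∈ Icc (ℓ - L') (ℓ + L'), f k)
        ≤ f (ℓ + L' + 2) + f (ℓ + L' + 1) + f (ℓ - L' - 1) + f (ℓ - L' - 2)) :
    μ * (∑ j ∈ range (L - 1), ∑ k ∈ Icc (ℓ - (L + j)) (ℓ + (L + j)), f k)
      ≤ 2 * ((∑ k ∈ Icc (ℓ + L + 1) (ℓ + 2 * L), f k)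
          + (∑ k ∈ Icc (ℓ - 2 * L) (ℓ - L - 1), f k)) := by
  have hsum := sum_le_sum fun j (hj : j ∈ range (L - 1)) ↦
    hyp (L + j) (by omega) (by rw [mem_range] at hj; omega)
  rw [← mul_sum] at hsum
  simp only [sum_add_distrib] at hsum
  linarith [sum_range_right_boundary_le hf ℓ L (c := 1) le_rfl one_le_two,
    sum_range_right_boundary_le hf ℓ L (c := 2) one_le_two le_rfl,
    sum_range_left_boundary_le hf hℓ (c := 1) le_rfl one_le_two,
    sum_range_left_boundary_le hf hℓ (c := 2) one_le_two le_rfl]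

theorem mul_window_le_sum_windows {μ : ℝ} (hμ : 0 ≤ μ) (hf : ∀ k, 0 ≤ f k) (L ℓ : ℕ) :
    μ * ((L : ℝ) - 3) * (∑ k ∈ Icc (ℓ - L) (ℓ + L), f k)
      ≤ μ * (∑ j ∈ range (L - 1), ∑ k ∈ Icc (ℓ - (L + j)) (ℓ + (L + j)), f k) := by
  have hwindows : (L - 1 : ℕ) • (∑ k ∈ Icc (ℓ - L) (ℓ + L), f k)
      ≤ ∑ j ∈ range (L - 1), ∑ k ∈ Icc (ℓ - (L + j)) (ℓ + (L + j)), f k := by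
    simpa using card_nsmul_le_sum (range (L - 1)) _ _
      fun j _ ↦ sum_Icc_window_mono hf ℓ (Nat.le_add_right L j)
  have hcount : (L : ℝ) - 3 ≤ ((L - 1 : ℕ) : ℝ) := by
    rcases Nat.eq_zero_or_pos L with rfl | hL
    · norm_num
    · rw [Nat.cast_sub hL, Nat.cast_one]; linarith
  rw [nsmul_eq_mul] at hwindows
  rw [mul_assoc]
  gcongr
  exact (mul_le_mul_of_nonneg_right hcount (sum_nonneg fun k _ ↦ hf k)).trans hwindows

end Windows

theorem stmt18_general (μ : ℝ) (L ℓ : ℕ) (f : ℕ → ℝ)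
    (hμ : 0 < μ) (hℓ : 2 * L ≤ ℓ)
    (hf : ∀ k, 0 ≤ f k)
    (hyp : ∀ L', L ≤ L' → L' ≤ 2 * L - 2 →
      μ * (∑ k ∈ Finset.Icc (ℓ - L') (ℓ + L'), f k)
        ≤ f (ℓ + L' + 2) + f (ℓ + L' + 1) + f (ℓ - L' - 1) + f (ℓ - L' - 2)) :
    μ / 2 * (∑ j ∈ Finset.range (L - 1), ∑ k ∈ Finset.Icc (ℓ - (L + j)) (ℓ + (L + j)), f k)
        ≤ (∑ k ∈ Finset.Icc (ℓ + L + 1) (ℓ + 2 * L), f k)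
          + (∑ k ∈ Finset.Icc (ℓ - 2 * L) (ℓ - L - 1), f k) ∧
    μ / 2 * ((L : ℝ) - 3) * (∑ k ∈ Finset.Icc (ℓ - L) (ℓ + L), f k)
      ≤ μ / 2 * (∑ j ∈ Finset.range (L - 1), ∑ k ∈ Finset.Icc (ℓ - (L + j)) (ℓ + (L + j)), f k) :=
  ⟨by linarith [mul_sum_windows_le_boundary hℓ hf hyp],
    mul_window_le_sum_windows (by positivity) hf L ℓ⟩

/-- Combinatorial counting step. With `σ = (μ/2)(L-3) > 2` and
`F_{L'}(ℓ) = ∑_{k=ℓ-L'}^{ℓ+L'} f k`, if `μ F_{L'}(ℓ)` is bounded by the four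
boundary terms for all `L ≤ L' ≤ 2L-2`, then (each boundary term appearing at
most twice) `∑_{k=ℓ+L+1}^{ℓ+2L} f k + ∑_{k=ℓ-2L}^{ℓ-L-1} f k
≥ (μ/2) ∑_{j=0}^{L-2} F_{L+j}(ℓ) ≥ σ F_L(ℓ)`. -/
theorem stmt18 (μ : ℝ) (L ℓ : ℕ) (f : ℕ → ℝ)
    (hμ : 0 < μ) (hσ : 2 < μ / 2 * ((L : ℝ) - 3)) (hℓ : 2 * L ≤ ℓ)
    (hf : ∀ k, 0 ≤ f k)
    (hyp : ∀ L', L ≤ L' → L' ≤ 2 * L - 2 →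
      μ * (∑ k ∈ Finset.Icc (ℓ - L') (ℓ + L'), f k)
        ≤ f (ℓ + L' + 2) + f (ℓ + L' + 1) + f (ℓ - L' - 1) + f (ℓ - L' - 2)) :
    μ / 2 * (∑ j ∈ Finset.range (L - 1), ∑ k ∈ Finset.Icc (ℓ - (L + j)) (ℓ + (L + j)), f k)
        ≤ (∑ k ∈ Finset.Icc (ℓ + L + 1) (ℓ + 2 * L), f k)
          + (∑ k ∈ Finset.Icc (ℓ - 2 * L) (ℓ - L - 1), f k) ∧
    μ / 2 * ((L : ℝ) - 3) * (∑ k ∈ Finset.Icc (ℓ - L) (ℓ + L), f k)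
      ≤ μ / 2 * (∑ j ∈ Finset.range (L - 1), ∑ k ∈ Finset.Icc (ℓ - (L + j)) (ℓ + (L + j)), f k) :=
  stmt18_general μ L ℓ f hμ hℓ hf hyp
end
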